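/- arXiv:2605.09114 — 3 statements merged into one kernel-verified Lean document; each statement's English description precedes it below -/
import Mathlib

section
/- Let r be a strict total order on a set A and s a strict total order on a set B (A, B subsets of a common type). If the union relation R = r ∪ s admits a cycle (a finite sequence x₀ R x₁ R ⋯ R x_k R x₀), then there exist elements a, b with a r b and b s a (a pair ordered oppositely by the two orders). Equivalently, r ∪ s is acyclic if and only if r and s agree on every pair of elements that both of them order. -/
/-- `t` is a strict total order on the set `S`. -/
def StrictTotalOn {M : Type*} (t : M → M → Prop) (S : Set M) : Prop :=
  (∀ a ∈ S, ¬ t a a) ∧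
  (∀ a ∈ S, ∀ b ∈ S, ∀ c ∈ S, t a b → t b c → t a c) ∧
  (∀ a ∈ S, ∀ b ∈ S, a ≠ b → t a b ∨ t b a)

/-- **A cycle in the union of two total orders collapses to an
oppositely-ordered pair.** If `r` is a strict total order on `A`, `s` a strict
total order on `B`, and the union relation `r ∪ s` admits a cycle, then some
pair is ordered oppositely by `r` and `s`.  Equivalently, `r ∪ s` is acyclic
iff `r` and `s` agree on every pair both of them order. -/
theorem union_cycle_gives_opposite_pair
    {M : Type*} (A B : Set M)
    (r s : M → M → Prop)
    (hr : StrictTotalOn r A) (hrdom : ∀ a b, r a b → a ∈ A ∧ b ∈ A)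
    (hs : StrictTotalOn s B) (hsdom : ∀ a b, s a b → a ∈ B ∧ b ∈ B) :
    ((∃ x, Relation.TransGen (fun a b => r a b ∨ s a b) x x) →
        ∃ a b, r a b ∧ s b a) ∧
    (Irreflexive (Relation.TransGen (fun a b => r a b ∨ s a b))
        ↔ ¬ ∃ a b, r a b ∧ s b a) := by
  obtain ⟨hri, hrt, hrtot⟩ := hr
  obtain ⟨hsi, hst, hstot⟩ := hs
  have main : (∃ x, Relation.TransGen (fun a b => r a b ∨ s a b) x x) →
      ∃ a b, r a b ∧ s b a := by
    rintro ⟨x, hx⟩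
    by_contra H
    push_neg at H
    -- invariant: any path decomposes as (optional s) · (single r) · (optional s), or is a single s
    have key : ∀ y z : M, Relation.TransGen (fun a b => r a b ∨ s a b) y z →
        s y z ∨ ∃ a b, r a b ∧ (y = a ∨ s y a) ∧ (z = b ∨ s b z) := by
      intro y z h
      induction h with
      | single h =>
        rcases h with h | h
        · exact Or.inr ⟨_, _, h, Or.inl rfl, Or.inl rfl⟩
        · exact Or.inl h
      | tail _ h2 ih =>
        rename_i u v hw
        rcases h2 with hrd | hsd
        · rcases ih with hsy | ⟨a, b, hab, hya, hbz⟩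
          · exact Or.inr ⟨_, _, hrd, Or.inr hsy, Or.inl rfl⟩
          · rcases hbz with rfl | hbc
            · exact Or.inr ⟨a, _, hrt a (hrdom _ _ hab).1 _ (hrdom _ _ hab).2 _
                (hrdom _ _ hrd).2 hab hrd, hya, Or.inl rfl⟩
            · have hbA : b ∈ A := (hrdom _ _ hab).2
              have hcA := (hrdom _ _ hrd).1
              have hbB := (hsdom _ _ hbc).1
              have hcB := (hsdom _ _ hbc).2
              have hne : b ≠ u := by rintro rfl; exact hsi _ hbB hbc
              have hrbc : r b u := by
                rcases hrtot b hbA u hcA hne with h | h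
                · exact h
                · exact absurd hbc (H _ _ h)
              have hrac : r a u := hrt a (hrdom _ _ hab).1 b hbA u hcA hab hrbc
              exact Or.inr ⟨a, v, hrt a (hrdom _ _ hab).1 u hcA v
                (hrdom _ _ hrd).2 hrac hrd, hya, Or.inl rfl⟩
        · rcases ih with hsy | ⟨a, b, hab, hya, hbz⟩
          · exact Or.inl (hst _ (hsdom _ _ hsy).1 _ (hsdom _ _ hsy).2 _
              (hsdom _ _ hsd).2 hsy hsd)
          · refine Or.inr ⟨a, b, hab, hya, ?_⟩
            rcases hbz with rfl | hbc
            · exact Or.inr hsd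
            · exact Or.inr (hst b (hsdom _ _ hbc).1 _ (hsdom _ _ hbc).2 _
                (hsdom _ _ hsd).2 hbc hsd)
    rcases key x x hx with hsxx | ⟨a, b, hab, hxa, hbx⟩
    · exact hsi x (hsdom _ _ hsxx).1 hsxx
    · rcases hxa with rfl | hxa
      · rcases hbx with rfl | hbx
        · exact hri x (hrdom _ _ hab).1 hab
        · exact H _ _ hab hbx
      · rcases hbx with rfl | hbx
        · exact H _ _ hab hxa
        · have : s b a := hst b (hsdom _ _ hbx).1 x (hsdom _ _ hbx).2 a
            (hsdom _ _ hxa).2 hbx hxa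
          exact H _ _ hab this
  refine ⟨main, ?_, ?_⟩
  · rintro hirr ⟨a, b, hab, hba⟩
    exact hirr a (Relation.TransGen.tail (Relation.TransGen.single (Or.inl hab)) (Or.inr hba))
  · intro hnp x hx
    exact hnp (main ⟨x, hx⟩)
end

section
/- Let M be a finite type, A, B ⊆ M, r a strict total order on A, and s a strict total order on B. If there is no pair a, b with a r b and b s a, then there exists a strict total order ≺ on A ∪ B extending both r and s (a r b implies a ≺ b, and a s b implies a ≺ b). Consequently, when two divergent views with agreeing orders merge, any topological sort of r ∪ s witnesses the merged order; and when they do not agree, a minimal cycle is a single oppositely-ordered pair. -/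
/-- **Agreement yields a merged order.** Let `M` be finite,
`r` a strict total order on `A ⊆ M` and `s` a strict total order on `B ⊆ M`.
If no pair is ordered oppositely by `r` and `s`, then there is a strict total
order on `A ∪ B` extending both. -/
theorem merged_order_exists
    {M : Type*} [Fintype M] (A B : Set M)
    (r s : M → M → Prop)
    (hr : StrictTotalOn r A) (hrdom : ∀ a b, r a b → a ∈ A ∧ b ∈ A)
    (hs : StrictTotalOn s B) (hsdom : ∀ a b, s a b → a ∈ B ∧ b ∈ B)
    (hagree : ¬ ∃ a b, r a b ∧ s b a) :
    ∃ t : M → M → Prop,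
      StrictTotalOn t (A ∪ B) ∧
      (∀ a b, r a b → t a b) ∧
      (∀ a b, s a b → t a b) := by
  classical
  obtain ⟨hrirr, hrtr, hrtot⟩ := hr
  obtain ⟨hsirr, hstr, hstot⟩ := hs
  -- an s-edge inside A is an r-edge
  have convS : ∀ x y, s x y → x ∈ A → y ∈ A → r x y := by
    intro x y hxy hxA hyA
    have hxB := (hsdom x y hxy).1
    have hne : x ≠ y := by rintro rfl; exact hsirr x hxB hxy
    rcases hrtot x hxA y hyA hne with h | h
    · exact h
    · exact absurd ⟨y, x, h, hxy⟩ hagree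
  -- an r-edge inside B is an s-edge
  have convR : ∀ x y, r x y → x ∈ B → y ∈ B → s x y := by
    intro x y hxy hxB hyB
    have hxA := (hrdom x y hxy).1
    have hne : x ≠ y := by rintro rfl; exact hrirr x hxA hxy
    rcases hstot x hxB y hyB hne with h | h
    · exact h
    · exact absurd ⟨x, y, hxy, h⟩ hagree
  -- the "one-switch" relation: transitive closure of r ∪ s
  set T : M → M → Prop := fun a b =>
    r a b ∨ s a b ∨ (∃ c, r a c ∧ s c b) ∨ (∃ c, s a c ∧ r c b) with hT
  have Tr : ∀ a b, r a b → T a b := fun a b h => Or.inl h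
  have Ts : ∀ a b, s a b → T a b := fun a b h => Or.inr (Or.inl h)
  have Tstep : ∀ a b c, T a b → (r b c ∨ s b c) → T a c := by
    intro a b c hab hbc
    rcases hab with hab | hab | ⟨x, hax, hxb⟩ | ⟨x, hax, hxb⟩ <;> rcases hbc with hbc | hbc
    · exact Or.inl (hrtr a (hrdom a b hab).1 b (hrdom a b hab).2 c (hrdom b c hbc).2 hab hbc)
    · exact Or.inr (Or.inr (Or.inl ⟨b, hab, hbc⟩))
    · exact Or.inr (Or.inr (Or.inr ⟨b, hab, hbc⟩))
    · exact Or.inr (Or.inl (hstr a (hsdom a b hab).1 b (hsdom a b hab).2 c (hsdom b c hbc).2 hab hbc))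
    · -- r a x, s x b, r b c
      have hxA := (hrdom a x hax).2
      have hbA := (hrdom b c hbc).1
      have hrxb := convS x b hxb hxA hbA
      have hrab := hrtr a (hrdom a x hax).1 x hxA b hbA hax hrxb
      exact Or.inl (hrtr a (hrdom a x hax).1 b hbA c (hrdom b c hbc).2 hrab hbc)
    · -- r a x, s x b, s b c
      exact Or.inr (Or.inr (Or.inl ⟨x, hax,
        hstr x (hsdom x b hxb).1 b (hsdom x b hxb).2 c (hsdom b c hbc).2 hxb hbc⟩))
    · -- s a x, r x b, r b c
      exact Or.inr (Or.inr (Or.inr ⟨x, hax,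
        hrtr x (hrdom x b hxb).1 b (hrdom x b hxb).2 c (hrdom b c hbc).2 hxb hbc⟩))
    · -- s a x, r x b, s b c
      have hxB := (hsdom a x hax).2
      have hbB := (hsdom b c hbc).1
      have hsxb := convR x b hxb hxB hbB
      have hsab := hstr a (hsdom a x hax).1 x hxB b hbB hax hsxb
      exact Or.inr (Or.inl (hstr a (hsdom a x hax).1 b hbB c (hsdom b c hbc).2 hsab hbc))
  have Ttrans : ∀ a b c, T a b → T b c → T a c := by
    intro a b c hab hbc
    rcases hbc with hbc | hbc | ⟨x, hbx, hxc⟩ | ⟨x, hbx, hxc⟩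
    · exact Tstep a b c hab (Or.inl hbc)
    · exact Tstep a b c hab (Or.inr hbc)
    · exact Tstep a x c (Tstep a b x hab (Or.inl hbx)) (Or.inr hxc)
    · exact Tstep a x c (Tstep a b x hab (Or.inr hbx)) (Or.inl hxc)
  have Tirr : ∀ a, ¬ T a a := by
    intro a ha
    rcases ha with ha | ha | ⟨x, hax, hxa⟩ | ⟨x, hax, hxa⟩
    · exact hrirr a (hrdom a a ha).1 ha
    · exact hsirr a (hsdom a a ha).1 ha
    · exact hagree ⟨a, x, hax, hxa⟩
    · exact hagree ⟨x, a, hxa, hax⟩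
  -- reflexive closure of T is a partial order on M
  set R : M → M → Prop := fun a b => a = b ∨ T a b with hR
  haveI : IsPartialOrder M R :=
    { refl := fun a => Or.inl rfl
      trans := by
        intro a b c hab hbc
        rcases hab with rfl | hab
        · exact hbc
        rcases hbc with rfl | hbc
        · exact Or.inr hab
        · exact Or.inr (Ttrans a b c hab hbc)
      antisymm := by
        intro a b hab hba
        rcases hab with rfl | hab
        · rfl
        rcases hba with rfl | hba
        · rfl
        · exact absurd (Ttrans a b a hab hba) (Tirr a) }
  obtain ⟨S, hS, hRS⟩ := extend_partialOrder R
  haveI : IsLinearOrder M S := hS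
  refine ⟨fun a b => S a b ∧ a ≠ b, ⟨?_, ?_, ?_⟩, ?_, ?_⟩
  · exact fun a _ h => h.2 rfl
  · intro a _ b _ c _ hab hbc
    refine ⟨Trans.trans hab.1 hbc.1, ?_⟩
    rintro rfl
    exact hab.2 (antisymm hab.1 hbc.1)
  · intro a _ b _ hne
    rcases total_of S a b with h | h
    · exact Or.inl ⟨h, hne⟩
    · exact Or.inr ⟨h, hne.symm⟩
  · intro a b hab
    refine ⟨hRS a b (Or.inr (Tr a b hab)), ?_⟩
    rintro rfl
    exact hrirr a (hrdom a a hab).1 hab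
  · intro a b hab
    refine ⟨hRS a b (Or.inr (Ts a b hab)), ?_⟩
    rintro rfl
    exact hsirr a (hsdom a a hab).1 hab
end

section
/- (Clock bound for causal arbitration, necessity.) Let Node and Msg be types, r : Msg → ℝ, ν : Msg → Node, and ε ≥ 0. Suppose there is a cross-node causal edge (j, i) with ν j ≠ ν i and real-time gap d = r i − r j satisfying 0 < d < 2ε. Then there exists an error assignment b : Node → ℝ with |b n| ≤ ε for all n such that the resulting timestamps ts m = r m + b (ν m) strictly invert the edge: ts i < ts j. (Take b(ν j) = ε and b(ν i) = −ε, so ts i − ts j = d − 2ε < 0; no tiebreak repairs a strict inversion.) Hence 2ε ≤ d_min is necessary for timestamp order to be guaranteed to refine causality in the worst case over bounded clock errors. -/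
/-- **Clock bound for causal arbitration: necessity.**
If a cross-node causal edge `(j, i)` has real-time gap `0 < r i − r j < 2ε`,
then some error assignment bounded by `ε` strictly inverts the edge's
timestamps: `ts i < ts j`. -/
theorem clock_bound_necessary
    {Node Msg : Type*}
    (r : Msg → ℝ) (ν : Msg → Node)
    (ε : ℝ) (hε : 0 ≤ ε)
    (j i : Msg)
    (hcross : ν j ≠ ν i)
    (hpos : 0 < r i - r j)
    (hlt : r i - r j < 2 * ε) :
    ∃ b : Node → ℝ,
      (∀ n, |b n| ≤ ε) ∧
      r i + b (ν i) < r j + b (ν j) := by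
  classical
  refine ⟨fun n => if n = ν j then ε else -ε, ?_, ?_⟩
  · intro n
    by_cases h : n = ν j <;> simp [h, abs_of_nonneg hε, abs_neg]
  · simp only [Ne.symm hcross, if_false, if_true, eq_self_iff_true]
    linarith
end
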